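/- Average reward under sinusoidal payoff: let v(τ) = p̄ sin τ + q̄ cos τ, let a > 0 and φ ∈ R, and define J(φ,a) = (1/(2π)) ∫₀^{2π} (p̄ sin u + q̄ cos u)·σ(a p̄ sin(u−φ) + a q̄ cos(u−φ)) du. Then J(φ,a) = cos(φ)·T₁(a), where T₁(a) = (1/(2π)) ∫₀^{2π} v(τ)·σ(a v(τ)) dτ ≥ 0. -/

import Mathlib

open Real

noncomputable def softmax {n : ℕ} (v : Fin n → ℝ) : Fin n → ℝ :=
  fun i => Real.exp (v i) / ∑ j, Real.exp (v j)

/-! Put τ = u − φ. The angle-addition formulas give v(u) = cos φ · v(τ) + sin φ · v'(τ), where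
v'(τ) = p̄ cos τ − q̄ sin τ is again a sinusoid. By periodicity the shift by φ leaves the integrals
unchanged, and the quadrature term ∫ ⟨v', σ(a v)⟩ vanishes because a ⟨v', σ(a v)⟩ is the derivative
of the periodic function τ ↦ log ∑ⱼ exp (a vⱼ(τ)).

For T₁ ≥ 0 we use v(τ + π) = −v(τ). Pairing τ with τ + π, it suffices to show
⟨x, σ(−x)⟩ ≤ ⟨x, σ(x)⟩. After clearing denominators the difference is a positive multiple of
∑ᵢⱼ (xᵢ − xⱼ) sinh (xᵢ − xⱼ) ≥ 0. -/

lemma mul_sinh_nonneg (t : ℝ) : 0 ≤ t * sinh t := by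
  rcases le_total 0 t with ht | ht
  · exact mul_nonneg ht (sinh_nonneg_iff.2 ht)
  · exact mul_nonneg_of_nonpos_of_nonpos ht (sinh_nonpos_iff.2 ht)

lemma two_mul_sum_sum_mul_of_odd {ι : Type*} [Fintype ι] (x : ι → ℝ) {h : ℝ → ℝ}
    (hh : ∀ t, h (-t) = -h t) :
    2 * ∑ i, ∑ j, x i * h (x i - x j) = ∑ i, ∑ j, (x i - x j) * h (x i - x j) := by
  have hswap : ∑ i, ∑ j, x j * h (x i - x j) = -∑ i, ∑ j, x i * h (x i - x j) := by
    rw [Finset.sum_comm, ← Finset.sum_neg_distrib]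
    refine Finset.sum_congr rfl fun i _ => ?_
    rw [← Finset.sum_neg_distrib]
    exact Finset.sum_congr rfl fun j _ => by rw [← neg_sub, hh, mul_neg]
  simp only [sub_mul, Finset.sum_sub_distrib, hswap]
  ring

section Softmax
variable {n : ℕ}

lemma sum_exp_pos [NeZero n] (v : Fin n → ℝ) : 0 < ∑ j, exp (v j) :=
  Finset.sum_pos (fun _ _ => exp_pos _) Finset.univ_nonempty

lemma continuous_softmax : Continuous (softmax (n := n)) := by
  rcases n.eq_zero_or_pos with rfl | hn
  · exact continuous_of_const fun _ _ => Subsingleton.elim _ _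
  · have : NeZero n := ⟨hn.ne'⟩
    exact continuous_pi fun i => (continuous_apply i).rexp.div
      (continuous_finsetSum _ fun j _ => (continuous_apply j).rexp) fun v => (sum_exp_pos v).ne'

lemma dotProduct_softmax (y x : Fin n → ℝ) :
    y ⬝ᵥ softmax x = (∑ i, y i * exp (x i)) / ∑ j, exp (x j) := by
  simp only [dotProduct, softmax, Finset.sum_div, mul_div_assoc]

lemma dotProduct_softmax_neg_le (x : Fin n → ℝ) : x ⬝ᵥ softmax (-x) ≤ x ⬝ᵥ softmax x := by
  rcases n.eq_zero_or_pos with rfl | hn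
  · simp
  have : NeZero n := ⟨hn.ne'⟩
  have hcross : (∑ i, x i * exp (x i)) * (∑ j, exp (-x j))
      - (∑ j, exp (x j)) * (∑ i, x i * exp (-x i)) = 2 * ∑ i, ∑ j, x i * sinh (x i - x j) := by
    rw [Finset.sum_mul_sum, mul_comm, Finset.sum_mul_sum, ← Finset.sum_sub_distrib, Finset.mul_sum]
    refine Finset.sum_congr rfl fun i _ => ?_
    rw [← Finset.sum_sub_distrib, Finset.mul_sum]
    refine Finset.sum_congr rfl fun j _ => ?_
    rw [sinh_eq, neg_sub, exp_sub, exp_sub, exp_neg, exp_neg]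
    field_simp
  have hsum : 0 ≤ ∑ i, ∑ j, (x i - x j) * sinh (x i - x j) :=
    Finset.sum_nonneg fun i _ => Finset.sum_nonneg fun j _ => mul_sinh_nonneg _
  rw [← sub_nonneg, dotProduct_softmax, dotProduct_softmax,
    div_sub_div _ _ (sum_exp_pos x).ne' (sum_exp_pos (-x)).ne']
  simp only [Pi.neg_apply] at hcross ⊢
  rw [hcross, two_mul_sum_sum_mul_of_odd x sinh_neg]
  exact div_nonneg hsum (mul_pos (sum_exp_pos x) (sum_exp_pos (-x))).le

lemma HasDerivAt.log_sum_exp {w : ℝ → Fin n → ℝ} {w' : Fin n → ℝ} {t : ℝ}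
    (hw : HasDerivAt w w' t) :
    HasDerivAt (fun s => Real.log (∑ j, Real.exp (w s j))) (w' ⬝ᵥ softmax (w t)) t := by
  rcases n.eq_zero_or_pos with rfl | hn
  · simpa using hasDerivAt_const t (0 : ℝ)
  have : NeZero n := ⟨hn.ne'⟩
  have hsum : HasDerivAt (fun s => ∑ j, Real.exp (w s j)) (∑ j, Real.exp (w t j) * w' j) t :=
    HasDerivAt.fun_sum fun j _ => (hasDerivAt_pi.mp hw j).exp
  convert hsum.log (sum_exp_pos (w t)).ne' using 1
  simp only [dotProduct_softmax, mul_comm]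

lemma integral_deriv_dotProduct_softmax_eq_zero {w w' : ℝ → Fin n → ℝ} {T : ℝ}
    (hw : ∀ t, HasDerivAt w (w' t) t) (hw' : Continuous w') (hT : w T = w 0) :
    ∫ t in 0..T, w' t ⬝ᵥ softmax (w t) = 0 := by
  have hcont : Continuous w := continuous_iff_continuousAt.2 fun t => (hw t).continuousAt
  rw [intervalIntegral.integral_eq_sub_of_hasDerivAt (fun t _ => (hw t).log_sum_exp)
    ((hw'.dotProduct (continuous_softmax.comp hcont)).intervalIntegrable _ _), hT, sub_self]

end Softmax

lemma Function.Periodic.intervalIntegral_comp_sub_right {E : Type*} [NormedAddCommGroup E]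
    [NormedSpace ℝ E] {f : ℝ → E} {T : ℝ} (hf : Function.Periodic f T) (d : ℝ) :
    ∫ x in 0..T, f (x - d) = ∫ x in 0..T, f x := by
  rw [intervalIntegral.integral_comp_sub_right, zero_sub, ← neg_add_eq_sub,
    hf.intervalIntegral_add_eq (-d) 0, zero_add]

lemma integral_nonneg_of_add_shift_nonneg {f : ℝ → ℝ} (hf : Continuous f) {c : ℝ} (hc : 0 ≤ c)
    (h : ∀ t, 0 ≤ f t + f (t + c)) : 0 ≤ ∫ t in 0..2 * c, f t := by
  have hshift : ∫ t in c..2 * c, f t = ∫ t in 0..c, f (t + c) := by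
    rw [intervalIntegral.integral_comp_add_right, zero_add, two_mul]
  rw [← intervalIntegral.integral_add_adjacent_intervals (b := c) (hf.intervalIntegrable _ _)
    (hf.intervalIntegrable _ _), hshift, ← intervalIntegral.integral_add (hf.intervalIntegrable _ _)
    ((by fun_prop : Continuous fun t => f (t + c)).intervalIntegrable _ _)]
  exact intervalIntegral.integral_nonneg hc fun t _ => h t

section Sinusoid
variable {E : Type*} [NormedAddCommGroup E] [NormedSpace ℝ E]

noncomputable def sinusoid (p q : E) (τ : ℝ) : E := sin τ • p + cos τ • q

lemma continuous_sinusoid (p q : E) : Continuous (sinusoid p q) := by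
  unfold sinusoid; fun_prop

lemma hasDerivAt_sinusoid (p q : E) (τ : ℝ) :
    HasDerivAt (sinusoid p q) (sinusoid (-q) p τ) τ := by
  have h := ((hasDerivAt_sin τ).smul_const p).fun_add ((hasDerivAt_cos τ).smul_const q)
  rwa [neg_smul, ← smul_neg, add_comm] at h

lemma sinusoid_periodic (p q : E) : Function.Periodic (sinusoid p q) (2 * π) := fun τ => by
  simp only [sinusoid, sin_add_two_pi, cos_add_two_pi]

lemma sinusoid_add_pi (p q : E) (τ : ℝ) : sinusoid p q (τ + π) = -sinusoid p q τ := by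
  simp only [sinusoid, sin_add_pi, cos_add_pi, neg_smul, neg_add]

lemma sinusoid_add (p q : E) (τ φ : ℝ) :
    sinusoid p q (τ + φ) = cos φ • sinusoid p q τ + sin φ • sinusoid (-q) p τ := by
  simp only [sinusoid, sin_add, cos_add, smul_add, smul_neg, smul_smul, add_smul, sub_smul]
  module

end Sinusoid

section SinusoidalPayoff
variable {n : ℕ} (p q : Fin n → ℝ) {a : ℝ}

lemma continuous_softmax_smul_sinusoid (a : ℝ) :
    Continuous fun τ => softmax (a • sinusoid p q τ) :=
  continuous_softmax.comp ((continuous_sinusoid p q).const_smul a)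

lemma integral_sinusoid_neg_dotProduct_softmax_eq_zero (ha : a ≠ 0) :
    ∫ τ in 0..2 * π, sinusoid (-q) p τ ⬝ᵥ softmax (a • sinusoid p q τ) = 0 := by
  have h := integral_deriv_dotProduct_softmax_eq_zero (w := a • sinusoid p q) (T := 2 * π)
    (fun τ => (hasDerivAt_sinusoid p q τ).const_smul a) ((continuous_sinusoid (-q) p).const_smul a)
    (by simp only [Pi.smul_apply, (sinusoid_periodic p q).eq])
  simpa only [Pi.smul_apply, smul_dotProduct, smul_eq_mul, intervalIntegral.integral_const_mul,
    mul_eq_zero, ha, false_or] using h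

lemma integral_sinusoid_dotProduct_softmax_nonneg (ha : 0 < a) :
    0 ≤ ∫ τ in 0..2 * π, sinusoid p q τ ⬝ᵥ softmax (a • sinusoid p q τ) := by
  refine integral_nonneg_of_add_shift_nonneg
    ((continuous_sinusoid p q).dotProduct (continuous_softmax_smul_sinusoid p q a)) pi_pos.le
    fun τ => ?_
  have h := dotProduct_softmax_neg_le (a • sinusoid p q τ)
  rw [smul_dotProduct, smul_dotProduct, smul_eq_mul, smul_eq_mul] at h
  rw [sinusoid_add_pi, smul_neg, neg_dotProduct, ← sub_eq_add_neg, sub_nonneg]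
  exact le_of_mul_le_mul_left h ha

lemma integral_sinusoid_dotProduct_softmax_comp_sub (ha : a ≠ 0) (φ : ℝ) :
    ∫ u in 0..2 * π, sinusoid p q u ⬝ᵥ softmax (a • sinusoid p q (u - φ))
      = cos φ * ∫ τ in 0..2 * π, sinusoid p q τ ⬝ᵥ softmax (a • sinusoid p q τ) := by
  set f := fun τ => sinusoid p q τ ⬝ᵥ softmax (a • sinusoid p q τ)
  set g := fun τ => sinusoid (-q) p τ ⬝ᵥ softmax (a • sinusoid p q τ)
  have hf : Continuous f :=
    (continuous_sinusoid p q).dotProduct (continuous_softmax_smul_sinusoid p q a)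
  have hg : Continuous g :=
    (continuous_sinusoid (-q) p).dotProduct (continuous_softmax_smul_sinusoid p q a)
  have hf_per : Function.Periodic f (2 * π) := fun τ => by simp only [f, sinusoid_periodic p q τ]
  have hg_per : Function.Periodic g (2 * π) := fun τ => by
    simp only [g, sinusoid_periodic p q τ, sinusoid_periodic (-q) p τ]
  have hsplit (u : ℝ) : sinusoid p q u ⬝ᵥ softmax (a • sinusoid p q (u - φ))
      = cos φ * f (u - φ) + sin φ * g (u - φ) := by
    have h := sinusoid_add p q (u - φ) φ
    rw [sub_add_cancel] at h
    rw [h, add_dotProduct, smul_dotProduct, smul_dotProduct, smul_eq_mul, smul_eq_mul]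
  have hcomp (h : ℝ → ℝ) (hh : Continuous h) (c : ℝ) :
      IntervalIntegrable (fun u => c * h (u - φ)) MeasureTheory.volume 0 (2 * π) :=
    (continuous_const.mul (hh.comp (continuous_sub_right φ))).intervalIntegrable _ _
  rw [intervalIntegral.integral_congr fun u _ => hsplit u,
    intervalIntegral.integral_add (hcomp f hf _) (hcomp g hg _), intervalIntegral.integral_const_mul,
    intervalIntegral.integral_const_mul, hf_per.intervalIntegral_comp_sub_right,
    hg_per.intervalIntegral_comp_sub_right, integral_sinusoid_neg_dotProduct_softmax_eq_zero p q ha,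
    mul_zero, add_zero]

end SinusoidalPayoff

theorem avg_reward_sinusoid (n : ℕ) (pbar qbar : Fin n → ℝ) (a φ : ℝ) (ha : 0 < a) :
    ((1 / (2 * π)) * ∫ u in (0:ℝ)..(2 * π),
        ∑ i, (Real.sin u * pbar i + Real.cos u * qbar i) *
          softmax (a • (Real.sin (u - φ) • pbar + Real.cos (u - φ) • qbar)) i)
      = Real.cos φ *
        ((1 / (2 * π)) * ∫ τ in (0:ℝ)..(2 * π),
          ∑ i, (Real.sin τ * pbar i + Real.cos τ * qbar i) *
            softmax (a • (Real.sin τ • pbar + Real.cos τ • qbar)) i) ∧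
    0 ≤ (1 / (2 * π)) * ∫ τ in (0:ℝ)..(2 * π),
          ∑ i, (Real.sin τ * pbar i + Real.cos τ * qbar i) *
            softmax (a • (Real.sin τ • pbar + Real.cos τ • qbar)) i := by
  -- each integrand is `sinusoid pbar qbar u ⬝ᵥ softmax (a • sinusoid pbar qbar (u - φ))` by unfolding
  refine ⟨?_, mul_nonneg (by positivity) (integral_sinusoid_dotProduct_softmax_nonneg pbar qbar ha)⟩
  rw [mul_left_comm]
  congr 1
  exact integral_sinusoid_dotProduct_softmax_comp_sub pbar qbar ha.ne' φ
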